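/- arXiv:2402.10632 — 2 statements merged into one kernel-verified Lean document; each statement's English description precedes it below -/
import Mathlib

section
/- Let p be a prime, G a finite group, U ≤ D p-subgroups of G with C_D(U) ≤ U, and let N be a normal subgroup of G with U normal in N. If O^p(N) ∩ U ≤ Z(G), then O^p(N) ∩ D ≤ Z(G). (Here O^p(N) denotes the smallest normal subgroup of N with p-group quotient.) -/
/-!
Let `R = O^p(N)` and `V = U`, viewed inside `N`. For `r ∈ R` and `v ∈ V` the commutator `⁅r, v⁆`
lies in `R ∩ V ≤ Z(G)`, so conjugation by `r ^ m` sends `v` to `⁅r, v⁆ ^ m * v`; as `V` is a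
`p`-group, a `p`-power of every `r ∈ R` centralizes `V`. Hence `N / (R ∩ C_N(V))` is a
`p`-group, so `R ≤ C_N(V)`. Finally `R ∩ D ≤ C_D(U) ≤ U`, whence `R ∩ D = R ∩ U ≤ Z(G)`.
-/

/-- The `p`-residual `O^p(H)` of a group `H`: the intersection of all normal
subgroups of `H` whose index is a power of `p` (equivalently, for finite groups,
the smallest normal subgroup with `p`-group quotient). -/
def pResidual (p : ℕ) (H : Type*) [Group H] : Subgroup H :=
  ⨅ K ∈ {K : Subgroup H | K.Normal ∧ ∃ n : ℕ, K.index = p ^ n}, K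

open scoped commutatorElement

section pResidual

variable {p : ℕ} {H : Type*} [Group H]

theorem mem_pResidual_iff {x : H} :
    x ∈ pResidual p H ↔ ∀ K : Subgroup H, K.Normal → (∃ n : ℕ, K.index = p ^ n) → x ∈ K := by
  simp [pResidual, Subgroup.mem_iInf, and_imp]

theorem pResidual_le {K : Subgroup H} (hK : K.Normal) (hindex : ∃ n : ℕ, K.index = p ^ n) :
    pResidual p H ≤ K :=
  fun _ hx => mem_pResidual_iff.mp hx K hK hindex

instance pResidual_normal : (pResidual p H).Normal where
  conj_mem x hx g := mem_pResidual_iff.mpr fun K hK hindex =>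
    hK.conj_mem x (mem_pResidual_iff.mp hx K hK hindex) g

variable [Fact p.Prime] [Finite H]

theorem pow_prime_pow_card_mem_pResidual (x : H) : x ^ p ^ Nat.card H ∈ pResidual p H := by
  refine mem_pResidual_iff.mpr fun K hK ⟨m, hm⟩ => ?_
  have hmem : x ^ p ^ m ∈ K := hm ▸ K.pow_index_mem x
  have hm_le : m ≤ Nat.card H := by
    have : p ^ m ≤ Nat.card H := hm ▸ Nat.le_of_dvd Nat.card_pos K.index_dvd_card
    have : m < p ^ m := Nat.lt_pow_self (Fact.out : p.Prime).one_lt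
    omega
  obtain ⟨k, hk⟩ := pow_dvd_pow p hm_le
  rw [hk, pow_mul]
  exact K.pow_mem hmem k

theorem pResidual_le_of_forall_exists_pow_mem {K : Subgroup H} [K.Normal]
    (hK : ∀ x : H, ∃ k : ℕ, x ^ p ^ k ∈ K) : pResidual p H ≤ K := by
  have hquot : IsPGroup p (H ⧸ K) := by
    rintro ⟨x⟩
    obtain ⟨k, hk⟩ := hK x
    exact ⟨k, (QuotientGroup.eq_one_iff _).mpr hk⟩
  obtain ⟨n, hn⟩ := IsPGroup.iff_card.mp hquot
  exact pResidual_le inferInstance ⟨n, K.index_eq_card.trans hn⟩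

end pResidual

theorem pow_mul_mul_inv_pow_of_commute_commutatorElement {G : Type*} [Group G] {r v : G}
    (h : Commute r ⁅r, v⁆) (m : ℕ) : r ^ m * v * (r ^ m)⁻¹ = ⁅r, v⁆ ^ m * v := by
  induction m with
  | zero => simp
  | succ m ih =>
    calc r ^ (m + 1) * v * (r ^ (m + 1))⁻¹ = r * (r ^ m * v * (r ^ m)⁻¹) * r⁻¹ := by group
      _ = ⁅r, v⁆ ^ m * (r * v * r⁻¹) := by
        rw [ih, ← mul_assoc r, (h.pow_right m).eq]; group
      _ = ⁅r, v⁆ ^ (m + 1) * v := by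
        rw [pow_succ, mul_assoc (⁅r, v⁆ ^ m), commutatorElement_def r v, inv_mul_cancel_right]

theorem pResidual_le_centralizer {p : ℕ} [Fact p.Prime] {H : Type*} [Group H] [Finite H]
    {V : Subgroup H} [V.Normal] (hV : IsPGroup p V)
    (hcomm : ∀ r ∈ pResidual p H, ∀ v ∈ V, Commute r ⁅r, v⁆) :
    pResidual p H ≤ Subgroup.centralizer (V : Set H) := by
  obtain ⟨e, he⟩ := IsPGroup.iff_card.mp hV
  have hpow : ∀ r ∈ pResidual p H, r ^ p ^ e ∈ Subgroup.centralizer (V : Set H) := by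
    refine fun r hr => Subgroup.mem_centralizer_iff.mpr fun v hv => ?_
    have hc : ⁅r, v⁆ ∈ V := Subgroup.commutator_le_right _ V
      (Subgroup.commutator_mem_commutator (Subgroup.mem_top r) hv)
    have hc_pow : ⁅r, v⁆ ^ p ^ e = 1 := by
      simpa [he] using congrArg Subtype.val (pow_card_eq_one' (x := (⟨_, hc⟩ : V)))
    have := pow_mul_mul_inv_pow_of_commute_commutatorElement (hcomm r hr v hv) (p ^ e)
    rw [hc_pow, one_mul, mul_inv_eq_iff_eq_mul] at this
    exact this.symm
  have hle : pResidual p H ≤ pResidual p H ⊓ Subgroup.centralizer (V : Set H) := by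
    refine pResidual_le_of_forall_exists_pow_mem fun x => ⟨Nat.card H + e, ?_⟩
    have hx := pow_prime_pow_card_mem_pResidual (p := p) x
    rw [pow_add, pow_mul]
    exact ⟨pow_mem hx _, hpow _ hx⟩
  exact fun r hr => (hle hr).2

theorem stmt_0_general (p : ℕ) [Fact p.Prime] (G : Type*) [Group G] [Finite G]
    (U D N : Subgroup G)
    (hUp : IsPGroup p U)
    (hC : D ⊓ Subgroup.centralizer (U : Set G) ≤ U)
    (hUN : U ≤ N)
    (hUnN : ∀ n ∈ N, ∀ u ∈ U, n * u * n⁻¹ ∈ U)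
    (h : (pResidual p ↥N).map N.subtype ⊓ U ≤ Subgroup.center G) :
    (pResidual p ↥N).map N.subtype ⊓ D ≤ Subgroup.center G := by
  set V : Subgroup N := U.subgroupOf N
  have : V.Normal := ⟨fun v hv n => hUnN n n.2 v hv⟩
  have hRV : pResidual p N ≤ Subgroup.centralizer (V : Set N) := by
    refine pResidual_le_centralizer (hUp.of_equiv (Subgroup.subgroupOfEquivOfLe hUN).symm)
      fun r hr v hv => ?_
    have hc : ⁅r, v⁆ ∈ pResidual p N ⊓ V := Subgroup.commutator_le_inf _ _
      (Subgroup.commutator_mem_commutator hr hv)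
    have hz := h ⟨Subgroup.mem_map_of_mem _ hc.1, hc.2⟩
    exact Subtype.ext (Subgroup.mem_center_iff.mp hz r)
  have hRU : (pResidual p N).map N.subtype ≤ Subgroup.centralizer (U : Set G) := by
    refine (Subgroup.map_mono hRV).trans
      ((Subgroup.map_centralizer_le_centralizer_image _ _).trans_eq ?_)
    rw [← Subgroup.coe_map, Subgroup.subgroupOf_map_subtype, inf_of_le_left hUN]
  exact fun g ⟨hgR, hgD⟩ => h ⟨hgR, hC ⟨hgD, hRU hgR⟩⟩

theorem stmt_0 (p : ℕ) [Fact p.Prime] (G : Type*) [Group G] [Finite G]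
    (U D N : Subgroup G) (hUD : U ≤ D)
    (hUp : IsPGroup p U) (hDp : IsPGroup p D)
    (hC : D ⊓ Subgroup.centralizer (U : Set G) ≤ U)
    [N.Normal] (hUN : U ≤ N)
    (hUnN : ∀ n ∈ N, ∀ u ∈ U, n * u * n⁻¹ ∈ U)
    (h : (pResidual p ↥N).map N.subtype ⊓ U ≤ Subgroup.center G) :
    (pResidual p ↥N).map N.subtype ⊓ D ≤ Subgroup.center G :=
  stmt_0_general p G U D N hUp hC hUN hUnN h
end

section
/- Let K ⊴ N be finite groups with N = K·Z(N), Z(K) = K ∩ Z(N), and O_p(N) ≤ Z(N). Then the map P ↦ P ∩ K is a bijection from the set of p-subgroups of N containing O_p(N) to the set of p-subgroups of K containing O_p(K), with inverse Q ↦ O_p(N)·Q. -/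
open scoped Pointwise


/-- The `p`-core `O_p(G)`: the join of all normal `p`-subgroups of `G`
(for a finite group this is the largest normal `p`-subgroup). -/
def pCore (p : ℕ) (G : Type*) [Group G] : Subgroup G :=
  ⨆ K ∈ {K : Subgroup G | K.Normal ∧ IsPGroup p K}, K

theorem le_pCore' {p : ℕ} {G : Type*} [Group G] {H : Subgroup G}
    (h1 : H.Normal) (h2 : IsPGroup p H) : H ≤ pCore p G :=
  le_iSup₂ (f := fun (K : Subgroup G) (_ : K ∈ {K : Subgroup G | K.Normal ∧ IsPGroup p K}) => K)
    H ⟨h1, h2⟩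

theorem pCore_normal_isPGroup (p : ℕ) (G : Type*) [Group G] [Finite G] :
    (pCore p G).Normal ∧ IsPGroup p (pCore p G) := by
  have hfin : ({K : Subgroup G | K.Normal ∧ IsPGroup p K}).Finite := Set.toFinite _
  have h : pCore p G = hfin.toFinset.sup id := by
    rw [Finset.sup_eq_iSup]
    simp only [pCore, Set.Finite.mem_toFinset, id_eq]
  rw [h]
  refine Finset.sup_induction (p := fun (H : Subgroup G) => H.Normal ∧ IsPGroup p H)
    ⟨inferInstance, IsPGroup.of_bot⟩ ?_ ?_
  · rintro a ⟨ha1, ha2⟩ b ⟨hb1, hb2⟩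
    haveI := ha1
    haveI := hb1
    exact ⟨Subgroup.sup_normal a b, ha2.to_sup_of_normal_right hb2⟩
  · intro L hL
    simpa using Set.Finite.mem_toFinset hfin |>.mp hL

/-- Subgroups of the center are normal. -/
theorem normal_of_le_center' {G : Type*} [Group G] {H : Subgroup G}
    (h : H ≤ Subgroup.center G) : H.Normal := by
  constructor
  intro n hn g
  have hc := Subgroup.mem_center_iff.mp (h hn) g
  have : g * n * g⁻¹ = n := by
    conv_lhs => rw [hc]
    group
  rwa [this]

/-- Decomposition of an element of a finite group into a commuting `p`-part and `p'`-part,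
both powers of the element. -/
theorem exists_p_decomp {G : Type*} [Group G] [Finite G] (p : ℕ) (hp : p.Prime) (z : G) :
    ∃ u v : G, z = v * u ∧ u ∈ Subgroup.zpowers z ∧ v ∈ Subgroup.zpowers z ∧
      (∃ s : ℕ, u ^ p ^ s = 1) ∧ (∃ t : ℕ, ¬ p ∣ t ∧ v ^ t = 1) ∧
      (∃ c : ℤ, v = z ^ c) := by
  have ho : orderOf z ≠ 0 := (orderOf_pos z).ne'
  set o := orderOf z with hodef
  set s := o.factorization p with hs
  set t := o / p ^ s with ht
  have hot : p ^ s * t = o := Nat.ordProj_mul_ordCompl_eq_self o p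
  have hpt : ¬ p ∣ t := Nat.not_dvd_ordCompl hp ho
  have hcopn : Nat.Coprime (p ^ s) t :=
    Nat.Coprime.pow_left s ((Nat.Prime.coprime_iff_not_dvd hp).mpr hpt)
  have hcop : IsCoprime ((p : ℤ) ^ s) (t : ℤ) := by
    have := Nat.Coprime.isCoprime hcopn
    exact_mod_cast this
  obtain ⟨a, b, hab⟩ := hcop
  refine ⟨z ^ (b * (t : ℤ)), z ^ (a * (p : ℤ) ^ s), ?_,
    Subgroup.zpow_mem _ (Subgroup.mem_zpowers z) _,
    Subgroup.zpow_mem _ (Subgroup.mem_zpowers z) _,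
    ⟨s, ?_⟩, ⟨t, hpt, ?_⟩, ⟨a * (p : ℤ) ^ s, rfl⟩⟩
  · rw [← zpow_add, hab, zpow_one]
  · have h1 : (z ^ (b * (t : ℤ))) ^ ((p : ℤ) ^ s) = 1 := by
      rw [← zpow_mul]
      have he : b * (t : ℤ) * (p : ℤ) ^ s = (o : ℤ) * b := by
        push_cast [← hot]; ring
      rw [he, zpow_mul, zpow_natCast, pow_orderOf_eq_one, one_zpow]
    rw [← zpow_natCast]
    push_cast
    exact h1
  · have h1 : (z ^ (a * (p : ℤ) ^ s)) ^ ((t : ℤ)) = 1 := by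
      rw [← zpow_mul]
      have he : a * (p : ℤ) ^ s * (t : ℤ) = (o : ℤ) * a := by
        push_cast [← hot]; ring
      rw [he, zpow_mul, zpow_natCast, pow_orderOf_eq_one, one_zpow]
    rw [← zpow_natCast]
    exact h1

theorem stmt_4 (p : ℕ) [Fact p.Prime] (N : Type*) [Group N] [Finite N]
    (K : Subgroup N) [K.Normal]
    (hprod : K ⊔ Subgroup.center N = ⊤)
    (hZK : (Subgroup.center ↥K).map K.subtype = K ⊓ Subgroup.center N)
    (hOp : pCore p N ≤ Subgroup.center N) :
    (∀ P : Subgroup N, IsPGroup p P → pCore p N ≤ P →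
        IsPGroup p (P.subgroupOf K) ∧ pCore p ↥K ≤ P.subgroupOf K ∧
          pCore p N ⊔ (P.subgroupOf K).map K.subtype = P) ∧
    (∀ Q : Subgroup ↥K, IsPGroup p Q → pCore p ↥K ≤ Q →
        IsPGroup p ↥(pCore p N ⊔ Q.map K.subtype) ∧
          pCore p N ≤ pCore p N ⊔ Q.map K.subtype ∧
          (pCore p N ⊔ Q.map K.subtype).subgroupOf K = Q) := by
  have hp : p.Prime := Fact.out
  obtain ⟨hOnorm, hOpg⟩ := pCore_normal_isPGroup p N
  obtain ⟨hKnorm, hKpg⟩ := pCore_normal_isPGroup p ↥K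
  haveI := hOnorm
  haveI := hKnorm
  -- every element of N is a product of an element of K and a central element
  have hsplit : ∀ g : N, ∃ k ∈ K, ∃ z ∈ Subgroup.center N, g = k * z := by
    intro g
    have hg : g ∈ ((K : Set N) * (Subgroup.center N : Set N)) := by
      rw [← Subgroup.mul_normal, hprod]
      simp
    obtain ⟨k, hk, z, hz, hkz⟩ := hg
    exact ⟨k, hk, z, hz, hkz.symm⟩
  -- the image of pCore p K in N is contained in pCore p N
  have hKcore_le : (pCore p ↥K).map K.subtype ≤ pCore p N := by
    apply le_pCore'
    · -- normal in N using N = K * Z(N)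
      constructor
      intro m hm g
      obtain ⟨k, hk, z, hz, rfl⟩ := hsplit g
      obtain ⟨m', hm', rfl⟩ := hm
      have hcz := Subgroup.mem_center_iff.mp hz (K.subtype m')
      have hzm : z * (K.subtype m') * z⁻¹ = K.subtype m' := by
        conv_lhs => rw [← hcz]
        group
      have hre : k * z * K.subtype m' * (k * z)⁻¹ = k * (z * K.subtype m' * z⁻¹) * k⁻¹ := by
        group
      rw [hre, hzm]
      have hmem : (⟨k, hk⟩ : ↥K) * m' * (⟨k, hk⟩ : ↥K)⁻¹ ∈ pCore p ↥K :=
        hKnorm.conj_mem m' hm' ⟨k, hk⟩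
      exact ⟨_, hmem, rfl⟩
    · exact hKpg.map K.subtype
  constructor
  · -- forward direction
    intro P hP hOP
    refine ⟨hP.comap_subtype, ?_, ?_⟩
    · exact Subgroup.map_le_iff_le_comap.mp (hKcore_le.trans hOP)
    · rw [Subgroup.subgroupOf_map_subtype]
      apply le_antisymm (sup_le hOP inf_le_left)
      intro x hx
      obtain ⟨n, hn⟩ := hP ⟨x, hx⟩
      have hxn : x ^ p ^ n = 1 := by
        have := congrArg (Subgroup.subtype P) hn
        simpa using this
      -- write x = k * z with k ∈ K, z central
      obtain ⟨k, hk, z, hz, rfl⟩ := hsplit x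
      obtain ⟨u, v, hzuv, hu, hv, ⟨s, hus⟩, ⟨t, hpt, hvt⟩, ⟨c, hc⟩⟩ :=
        exists_p_decomp p hp z
      have huc : u ∈ Subgroup.center N := by
        obtain ⟨cu, rfl⟩ := Subgroup.mem_zpowers_iff.mp hu
        exact Subgroup.zpow_mem _ hz cu
      have hvc : v ∈ Subgroup.center N := by
        obtain ⟨cv, rfl⟩ := Subgroup.mem_zpowers_iff.mp hv
        exact Subgroup.zpow_mem _ hz cv
      -- u lies in the p-core of N
      have huO : u ∈ pCore p N := by
        refine le_pCore' ?_ ?_ (Subgroup.mem_zpowers u)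
        · exact normal_of_le_center' (by
            intro w hw
            obtain ⟨cw, rfl⟩ := Subgroup.mem_zpowers_iff.mp hw
            exact Subgroup.zpow_mem _ huc cw)
        · rintro ⟨w, hw⟩
          obtain ⟨cw, rfl⟩ := Subgroup.mem_zpowers_iff.mp hw
          refine ⟨s, ?_⟩
          have h1 : (u ^ cw) ^ ((p : ℕ) ^ s) = 1 := by
            rw [← zpow_natCast, ← zpow_mul, mul_comm, zpow_mul, zpow_natCast, hus, one_zpow]
          ext
          simpa using h1
      -- v lies in K
      have hvK : v ∈ K := by
        rw [← QuotientGroup.eq_one_iff (G := N) (N := K)]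
        set q : N →* N ⧸ K := QuotientGroup.mk' K with hq
        have hqk : q k = 1 := (QuotientGroup.eq_one_iff k).mpr hk
        have hqx : q (k * z) = q z := by
          rw [map_mul, hqk, one_mul]
        have h1 : (q v) ^ (p ^ n) = 1 := by
          have hqv : q v = (q (k * z)) ^ c := by
            rw [hqx, hc, map_zpow]
          rw [hqv, ← zpow_natCast, ← zpow_mul, mul_comm, zpow_mul, zpow_natCast,
            ← map_pow, hxn, map_one, one_zpow]
        have h2 : (q v) ^ t = 1 := by rw [← map_pow, hvt, map_one]
        have hd1 : orderOf (q v) ∣ p ^ n := orderOf_dvd_of_pow_eq_one h1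
        have hd2 : orderOf (q v) ∣ t := orderOf_dvd_of_pow_eq_one h2
        have hcop : Nat.Coprime (p ^ n) t :=
          Nat.Coprime.pow_left n ((Nat.Prime.coprime_iff_not_dvd hp).mpr hpt)
        have hone : orderOf (q v) = 1 :=
          Nat.eq_one_of_dvd_one (hcop ▸ Nat.dvd_gcd hd1 hd2)
        exact orderOf_eq_one_iff.mp hone
      -- conclude
      have hkvP : k * v ∈ P := by
        have huP : u ∈ P := hOP huO
        have heq : k * v = (k * z) * u⁻¹ := by
          rw [hzuv]; group
        rw [heq]
        exact P.mul_mem hx (P.inv_mem huP)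
      have hkvK : k * v ∈ K := K.mul_mem hk hvK
      have heq2 : k * z = u * (k * v) := by
        rw [hzuv]
        have := Subgroup.mem_center_iff.mp huc (k * v)
        rw [← this]
        group
      rw [heq2]
      exact Subgroup.mul_mem _ ((le_sup_left : pCore p N ≤ _) huO)
        ((le_sup_right : P ⊓ K ≤ _) ⟨hkvP, hkvK⟩)
  · -- reverse direction
    intro Q hQ hQK
    have hMp : IsPGroup p (Q.map K.subtype) := hQ.map K.subtype
    have hMK : Q.map K.subtype ≤ K := Subgroup.map_subtype_le Q
    refine ⟨hOpg.to_sup_of_normal_left hMp, le_sup_left, ?_⟩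
    -- O_p(N) ∩ K ≤ image of Q
    have hOKM : pCore p N ⊓ K ≤ Q.map K.subtype := by
      have hle : (pCore p N ⊓ K).subgroupOf K ≤ Q := by
        refine le_trans ?_ hQK
        apply le_pCore'
        · exact Subgroup.Normal.comap inferInstance K.subtype
        · exact (hOpg.to_inf_left (K := K)).comap_subtype
      intro x hx
      exact ⟨⟨x, hx.2⟩, hle hx, rfl⟩
    have hkey : (pCore p N ⊔ Q.map K.subtype) ⊓ K = Q.map K.subtype := by
      apply le_antisymm
      · rintro x ⟨hx1, hx2⟩
        have hx1' : x ∈ ((pCore p N : Set N) * (Q.map K.subtype : Set N)) := by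
          rw [← Subgroup.normal_mul]
          exact hx1
        obtain ⟨z, hz, m, hm, rfl⟩ := hx1'
        have hzK : z ∈ K := by
          have hre : z = z * m * m⁻¹ := by group
          rw [hre]
          exact K.mul_mem hx2 (K.inv_mem (hMK hm))
        exact Subgroup.mul_mem _ (hOKM ⟨hz, hzK⟩) hm
      · exact le_inf le_sup_right hMK
    ext x
    simp only [Subgroup.mem_subgroupOf]
    constructor
    · intro h
      have hx : (x : N) ∈ (pCore p N ⊔ Q.map K.subtype) ⊓ K := ⟨h, x.2⟩
      rw [hkey] at hx
      obtain ⟨q, hq, hqx⟩ := hx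
      have hqx' : q = x := Subtype.ext hqx
      rwa [← hqx']
    · intro h
      exact (le_sup_right : Q.map K.subtype ≤ _) ⟨x, h, rfl⟩
end
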